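/- arXiv:1307.6132 — 7 statements merged into one kernel-verified Lean document; each statement's English description precedes it below -/
import Mathlib

section
/- Let $K_{ij}$ be the matrices defined by $(K_{ij})_{ii}=x_j^2$, $(K_{ij})_{jj}=x_i^2$, $(K_{ij})_{ij}=(K_{ij})_{ji}=-x_ix_j$ at a point $x\in\mathbb{R}^{n+1}$, with all other entries zero, and set $K_{ji}:=K_{ij}$. Then for distinct indices $i,j,k$, $[K_{ij}, K_{ik}+K_{jk}]=0$ as matrices, at every point $x$. -/
/-- The extension to `ℝ^{n+1}` of the Killing tensor `K_{ij}` with diagonal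
algebraic curvature tensor, as a matrix at the point `x`. -/
def Kmat {m : ℕ} (x : Fin m → ℝ) (i j : Fin m) : Matrix (Fin m) (Fin m) ℝ :=
  Matrix.of fun a b =>
    if a = i ∧ b = i then (x j) ^ 2
    else if a = j ∧ b = j then (x i) ^ 2
    else if (a = i ∧ b = j) ∨ (a = j ∧ b = i) then -(x i * x j)
    else 0

lemma sum_three {m : ℕ} {i j k : Fin m}
    (hij : i ≠ j) (hik : i ≠ k) (hjk : j ≠ k) (f : Fin m → ℝ)
    (hf : ∀ c, c ≠ i → c ≠ j → c ≠ k → f c = 0) :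
    ∑ c, f c = f i + f j + f k := by
  rw [← Finset.sum_subset (Finset.subset_univ ({i, j, k} : Finset (Fin m)))]
  · rw [Finset.sum_insert (by simp [hij, hik]), Finset.sum_insert (by simp [hjk]),
      Finset.sum_singleton, add_assoc]
  · intro c _ hc
    simp only [Finset.mem_insert, Finset.mem_singleton, not_or] at hc
    exact hf c hc.1 hc.2.1 hc.2.2

theorem stmt1 (n : ℕ) (i j k : Fin (n + 1))
    (hij : i ≠ j) (hik : i ≠ k) (hjk : j ≠ k) (x : Fin (n + 1) → ℝ) :
    Kmat x i j * (Kmat x i k + Kmat x j k) - (Kmat x i k + Kmat x j k) * Kmat x i j = 0 := by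
  ext a b
  simp only [Matrix.sub_apply, Matrix.mul_apply, Matrix.add_apply, Matrix.zero_apply]
  rw [sum_three hij hik hjk _ (fun c h1 h2 h3 => by simp [Kmat, h1, h2, h3]),
      sum_three hij hik hjk _ (fun c h1 h2 h3 => by simp [Kmat, h1, h2, h3])]
  by_cases ha1 : a = i <;> by_cases ha2 : a = j <;> by_cases ha3 : a = k <;>
    by_cases hb1 : b = i <;> by_cases hb2 : b = j <;> by_cases hb3 : b = k <;>
    simp_all [Kmat, hij.symm, hik.symm, hjk.symm] <;> ring
end

section
/- For distinct indices $i,j,k$, the functions $K_{ij}(x,p)=(x_ip_j-x_jp_i)^2$ satisfy $\{K_{ij}, K_{ik}+K_{jk}\}=0$ under the canonical Poisson bracket. -/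
open MvPolynomial

/-- The canonical Poisson bracket on polynomial functions on `ℝ^{2m}` with
coordinates `x_a` (variables `Sum.inl a`) and `p_a` (variables `Sum.inr a`). -/
noncomputable def poisson {m : ℕ} (F G : MvPolynomial (Fin m ⊕ Fin m) ℝ) :
    MvPolynomial (Fin m ⊕ Fin m) ℝ :=
  ∑ a : Fin m,
    (pderiv (Sum.inl a) F * pderiv (Sum.inr a) G -
      pderiv (Sum.inl a) G * pderiv (Sum.inr a) F)

/-- The quadratic function `K_{ij}(x,p) = (x_i p_j - x_j p_i)^2`. -/
noncomputable def Kp {m : ℕ} (i j : Fin m) : MvPolynomial (Fin m ⊕ Fin m) ℝ :=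
  (X (Sum.inl i) * X (Sum.inr j) - X (Sum.inl j) * X (Sum.inr i)) ^ 2

lemma pd_ll {m : ℕ} {a b : Fin m} (h : a ≠ b) :
    pderiv (Sum.inl b) (X (Sum.inl a) : MvPolynomial (Fin m ⊕ Fin m) ℝ) = 0 :=
  pderiv_X_of_ne (by simp [h])

lemma pd_rr {m : ℕ} {a b : Fin m} (h : a ≠ b) :
    pderiv (Sum.inr b) (X (Sum.inr a) : MvPolynomial (Fin m ⊕ Fin m) ℝ) = 0 :=
  pderiv_X_of_ne (by simp [h])

lemma pd_lr {m : ℕ} (a b : Fin m) :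
    pderiv (Sum.inl b) (X (Sum.inr a) : MvPolynomial (Fin m ⊕ Fin m) ℝ) = 0 :=
  pderiv_X_of_ne (by simp)

lemma pd_rl {m : ℕ} (a b : Fin m) :
    pderiv (Sum.inr b) (X (Sum.inl a) : MvPolynomial (Fin m ⊕ Fin m) ℝ) = 0 :=
  pderiv_X_of_ne (by simp)

theorem stmt5 (n : ℕ) (i j k : Fin (n + 1)) (hij : i ≠ j) (hik : i ≠ k) (hjk : j ≠ k) :
    poisson (Kp i j) (Kp i k + Kp j k) = 0 := by
  classical
  rw [poisson, ← Finset.sum_subset (Finset.subset_univ ({i, j, k} : Finset (Fin (n+1))))]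
  · rw [Finset.sum_insert (by simp [hij, hik]), Finset.sum_insert (by simp [hjk]),
      Finset.sum_singleton]
    simp only [Kp, map_add, pderiv_pow, map_sub, pderiv_mul, pderiv_X_self,
      pd_lr, pd_rl, pd_ll hij, pd_ll hij.symm, pd_ll hik, pd_ll hik.symm,
      pd_ll hjk, pd_ll hjk.symm, pd_rr hij, pd_rr hij.symm, pd_rr hik,
      pd_rr hik.symm, pd_rr hjk, pd_rr hjk.symm]
    ring
  · intro a _ ha
    simp only [Finset.mem_insert, Finset.mem_singleton, not_or] at ha
    obtain ⟨h1, h2, h3⟩ := ha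
    simp [Kp, pd_ll (Ne.symm h1), pd_ll (Ne.symm h2), pd_ll (Ne.symm h3),
      pd_rr (Ne.symm h1), pd_rr (Ne.symm h2), pd_rr (Ne.symm h3), pd_lr, pd_rl]
end

section
/- For $n\ge 2$, the polynomials $P_{ijk}(x,p)=(x_ip_j-x_jp_i)(x_jp_k-x_kp_j)(x_kp_i-x_ip_k)$ for $1\le i<j<k\le n+1$ are linearly independent over $\mathbb{R}$. -/
/-- The function `P_{ijk}(x,p) = (x_i p_j - x_j p_i)(x_j p_k - x_k p_j)(x_k p_i - x_i p_k)`. -/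
def Pfun {m : ℕ} (i j k : Fin m) : ((Fin m → ℝ) × (Fin m → ℝ)) → ℝ :=
  fun xp => (xp.1 i * xp.2 j - xp.1 j * xp.2 i) *
    (xp.1 j * xp.2 k - xp.1 k * xp.2 j) * (xp.1 k * xp.2 i - xp.1 i * xp.2 k)

lemma aux_off {m : ℕ} (i j k a b c : Fin m) (hij : i < j) (hjk : j < k)
    (hab : a < b) (hbc : b < c) (hne : (a, b, c) ≠ (i, j, k)) :
    Pfun a b c (fun t => if t = i ∨ t = j ∨ t = k then (1:ℝ) else 0,
      fun t => if t = j then (1:ℝ) else if t = k then 2 else 0) = 0 := by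
  simp only [Pfun]
  by_cases ha : a = i ∨ a = j ∨ a = k
  · by_cases hb : b = i ∨ b = j ∨ b = k
    · by_cases hc : c = i ∨ c = j ∨ c = k
      · exfalso; apply hne
        rcases ha with h|h|h <;> rcases hb with h'|h'|h' <;> rcases hc with h''|h''|h'' <;>
          subst_vars <;> first | rfl | omega
      · push_neg at hc
        rw [if_neg (by tauto : ¬(c = i ∨ c = j ∨ c = k)), if_neg hc.2.1, if_neg hc.2.2]
        ring
    · push_neg at hb
      rw [if_neg (by tauto : ¬(b = i ∨ b = j ∨ b = k)), if_neg hb.2.1, if_neg hb.2.2]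
      ring
  · push_neg at ha
    rw [if_neg (by tauto : ¬(a = i ∨ a = j ∨ a = k)), if_neg ha.2.1, if_neg ha.2.2]
    ring

theorem stmt7 (n : ℕ) (hn : 2 ≤ n) :
    LinearIndependent ℝ
      (fun t : {t : Fin (n + 1) × Fin (n + 1) × Fin (n + 1) //
          t.1 < t.2.1 ∧ t.2.1 < t.2.2} => Pfun t.1.1 t.1.2.1 t.1.2.2) := by
  classical
  rw [Fintype.linearIndependent_iff]
  intro g hg
  rintro ⟨⟨i, j, k⟩, hij, hjk⟩
  have hne1 : i ≠ j := ne_of_lt hij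
  have hne2 : j ≠ k := ne_of_lt hjk
  have hne3 : i ≠ k := ne_of_lt (hij.trans hjk)
  set xv : Fin (n+1) → ℝ := fun t => if t = i ∨ t = j ∨ t = k then 1 else 0 with hxv
  set pv : Fin (n+1) → ℝ := fun t => if t = j then 1 else if t = k then 2 else 0 with hpv
  have h0 := congrFun hg (xv, pv)
  rw [Finset.sum_apply, Pi.zero_apply] at h0
  rw [Fintype.sum_eq_single (⟨(i, j, k), hij, hjk⟩ :
      {t : Fin (n + 1) × Fin (n + 1) × Fin (n + 1) // t.1 < t.2.1 ∧ t.2.1 < t.2.2})] at h0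
  · simp only [Pi.smul_apply, smul_eq_mul, Pfun, hxv, hpv] at h0
    simp only [if_true, true_or, or_true, if_neg hne1, if_neg hne3, if_neg hne2.symm] at h0
    nlinarith [h0]
  · rintro ⟨⟨a, b, c⟩, hab, hbc⟩ hs
    have hne : (a, b, c) ≠ (i, j, k) := fun h => hs (Subtype.ext h)
    simp only [Pi.smul_apply, smul_eq_mul, hxv, hpv]
    rw [aux_off i j k a b c hij hjk hab hbc hne, mul_zero]
end

section
/- Suppose real coefficients $\lambda_{ijk}$ for $1\le i<j<k\le n+1$ satisfy $\sum_{i<j<k}\lambda_{ijk}[K_{ij},K_{jk}](x)=0$ for all $x\in\mathbb{R}^{n+1}$, where $[\cdot,\cdot]$ is the matrix commutator of the matrices $K_{ij}$ defined below. Then all $\lambda_{ijk}=0$. -/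
lemma Kmat_symm {m : ℕ} (x : Fin m → ℝ) (i j a b : Fin m) :
    Kmat x i j a b = Kmat x i j b a := by
  simp only [Kmat, Matrix.of_apply]
  split_ifs <;> first | rfl | tauto

lemma Kmat_row_zero {m : ℕ} (x : Fin m → ℝ) {i j a : Fin m} (b : Fin m)
    (h1 : a ≠ i) (h2 : a ≠ j) : Kmat x i j a b = 0 := by
  simp only [Kmat, Matrix.of_apply]
  split_ifs <;> tauto

lemma Kmat_col2 {m : ℕ} (x : Fin m → ℝ) {i j : Fin m} (a : Fin m) (hij : i ≠ j) :
    Kmat x i j a j = if a = j then (x i)^2 else if a = i then -(x i * x j) else 0 := by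
  simp only [Kmat, Matrix.of_apply]
  split_ifs <;> tauto

lemma Kmat_col1 {m : ℕ} (x : Fin m → ℝ) {i j : Fin m} (a : Fin m) (hij : i ≠ j) :
    Kmat x i j a i = if a = i then (x j)^2 else if a = j then -(x i * x j) else 0 := by
  simp only [Kmat, Matrix.of_apply]
  split_ifs <;> tauto

lemma commEntry {m : ℕ} (x : Fin m → ℝ) {i j k : Fin m} (a c : Fin m)
    (hij : i ≠ j) (hjk : j ≠ k) (hik : i ≠ k) :
    (Kmat x i j * Kmat x j k - Kmat x j k * Kmat x i j) a c =
      Kmat x i j a j * Kmat x j k j c - Kmat x j k a j * Kmat x i j j c := by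
  simp only [Matrix.sub_apply, Matrix.mul_apply]
  rw [Finset.sum_eq_single j, Finset.sum_eq_single j]
  · intro d _ hd
    rcases eq_or_ne d i with rfl | hdi
    · rw [Kmat_symm x j k a d, Kmat_row_zero x a hij hik]; ring
    · rw [Kmat_row_zero x c hdi hd]; ring
  · intro habs; exact absurd (Finset.mem_univ j) habs
  · intro d _ hd
    rcases eq_or_ne d k with rfl | hdk
    · rw [Kmat_symm x i j a d, Kmat_row_zero x a hik.symm hd]; ring
    · rw [Kmat_row_zero x c hd hdk]; ring
  · intro habs; exact absurd (Finset.mem_univ j) habs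

set_option maxHeartbeats 1000000 in
theorem stmt8 (n : ℕ)
    (lam : {t : Fin (n + 1) × Fin (n + 1) × Fin (n + 1) // t.1 < t.2.1 ∧ t.2.1 < t.2.2} → ℝ)
    (h : ∀ x : Fin (n + 1) → ℝ,
      ∑ t : {t : Fin (n + 1) × Fin (n + 1) × Fin (n + 1) // t.1 < t.2.1 ∧ t.2.1 < t.2.2},
        lam t • (Kmat x t.1.1 t.1.2.1 * Kmat x t.1.2.1 t.1.2.2 -
                 Kmat x t.1.2.1 t.1.2.2 * Kmat x t.1.1 t.1.2.1) = 0) :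
    ∀ t, lam t = 0 := by
  rintro ⟨⟨a, b, c⟩, hab, hbc⟩
  dsimp only at hab hbc
  have hac : a < c := hab.trans hbc
  have h' := congrFun (congrFun
    (h (fun m => if m = a ∨ m = b ∨ m = c then (1 : ℝ) else 0)) a) c
  set x : Fin (n + 1) → ℝ := fun m => if m = a ∨ m = b ∨ m = c then (1 : ℝ) else 0 with hx
  have hxa : x a = 1 := by simp [hx]
  have hxb : x b = 1 := by simp [hx]
  have hxc : x c = 1 := by simp [hx]
  simp only [Matrix.sum_apply, Matrix.smul_apply, Matrix.zero_apply, smul_eq_mul] at h'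
  rw [Finset.sum_eq_single (⟨(a, b, c), hab, hbc⟩ :
      {t : Fin (n + 1) × Fin (n + 1) × Fin (n + 1) // t.1 < t.2.1 ∧ t.2.1 < t.2.2})] at h'
  · have e1 : Kmat x a b a b = -(x a * x b) := by
      rw [Kmat_col2 x a hab.ne, if_neg hab.ne, if_pos rfl]
    have e2 : Kmat x b c b c = -(x b * x c) := by
      rw [Kmat_col2 x b hbc.ne, if_neg hbc.ne, if_pos rfl]
    have e3 : Kmat x b c a b = 0 := by
      rw [Kmat_col1 x a hbc.ne, if_neg hab.ne, if_neg hac.ne]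
    have e4 : Kmat x a b b c = 0 := by
      rw [Kmat_symm, Kmat_col2 x c hab.ne, if_neg hbc.ne', if_neg hac.ne']
    rw [commEntry x a c hab.ne hbc.ne hac.ne, e1, e2, e3, e4, hxa, hxb, hxc] at h'
    norm_num at h'
    exact h'
  · rintro ⟨⟨i, j, k⟩, hij, hjk⟩ - hne
    dsimp only at hij hjk ⊢
    have hne' : ¬(i = a ∧ j = b ∧ k = c) := by
      simpa [Subtype.ext_iff, Prod.ext_iff] using hne
    have hE : (Kmat x i j * Kmat x j k - Kmat x j k * Kmat x i j) a c = 0 := by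
      clear h h' hne hxa hxb hxc
      rw [commEntry x a c hij.ne hjk.ne (hij.trans hjk).ne,
        Kmat_col2 x a hij.ne, Kmat_symm x j k j c, Kmat_col1 x c hjk.ne,
        Kmat_col1 x a hjk.ne, Kmat_symm x i j j c, Kmat_col2 x c hij.ne]
      rw [hx]
      beta_reduce
      clear hx
      clear_value x
      clear x
      split_ifs <;> try ring
      all_goals try norm_num
      all_goals exfalso
      all_goals simp only [Fin.ext_iff, Fin.lt_def, not_and, not_or, ne_eq] at *
      all_goals omega
    rw [hE, mul_zero]
  · intro habs; exact absurd (Finset.mem_univ _) habs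
end

section
/- Let $I=\{1,\dots,n\}$ and let $I_1\cup\cdots\cup I_k=I$ be a partition into disjoint nonempty sets. Define $\iota_0(K_{\alpha\beta}):=\sum_{a\in I_\alpha,\,b\in I_\beta}K_{ab}$ for $\alpha\ne\beta\in\{1,\dots,k\}$, where the $K_{ab}$ are the Killing tensor functions $K_{ab}(x,p)=(x_ap_b-x_bp_a)^2$ and $K_{\alpha\beta}$ the analogous functions in $k$ variables. Then $\iota_0$ preserves the Kohno-Drinfeld relations: for distinct $\alpha,\beta,\gamma$, $\{\iota_0(K_{\alpha\beta}),\iota_0(K_{\alpha\gamma})+\iota_0(K_{\beta\gamma})\}=0$, and for distinct $\alpha,\beta,\gamma,\delta$, $\{\iota_0(K_{\alpha\beta}),\iota_0(K_{\gamma\delta})\}=0$, under the canonical Poisson bracket on $\mathbb{R}^{2n}$. -/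
open MvPolynomial

/-- `ι₀` maps the generator `K_{αβ}` (in `k` variables) to
`∑_{a ∈ I_α, b ∈ I_β} K_{ab}` (in `n` variables). -/
noncomputable def iota0 {n : ℕ} {k : ℕ} (I : Fin k → Finset (Fin n))
    (α β : Fin k) : MvPolynomial (Fin n ⊕ Fin n) ℝ :=
  ∑ a ∈ I α, ∑ b ∈ I β, Kp a b

/-!
`K_{ab}` involves only the coordinates with indices `a` and `b`, and the Poisson bracket commutes
with relabelling the coordinates along an injection `Fin m → Fin m'`. Hence
`{K_{ab}, K_{cd}} = 0` and `{K_{ab}, K_{ac} + K_{bc}} = 0` for distinct indices follow from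
explicit computations in `4` and `3` variables. Expanding `ι₀` bilinearly, every term of
`{ι₀(K_{αβ}), ι₀(K_{γδ})}` is of the first kind; in `{ι₀(K_{αβ}), ι₀(K_{αγ})}` only the terms
`{K_{ab}, K_{ac}}` with a shared index survive, and they pair up with the terms
`{K_{ab}, K_{bc}}` of `{ι₀(K_{αβ}), ι₀(K_{βγ})}` into relations of the second kind.
-/

namespace MvPolynomial

lemma pderiv_rename_eq_zero {R σ τ : Type*} [CommSemiring R] {g : σ → τ} {j : τ}
    (hj : j ∉ Set.range g) (F : MvPolynomial σ R) : pderiv j (rename g F) = 0 := by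
  classical
  refine pderiv_eq_zero_of_notMem_vars fun hmem => ?_
  obtain ⟨i, -, rfl⟩ := Finset.mem_image.mp (vars_rename g F hmem)
  exact hj ⟨i, rfl⟩

end MvPolynomial

section Poisson

variable {m : ℕ}

lemma poisson_add_left (F G H : MvPolynomial (Fin m ⊕ Fin m) ℝ) :
    poisson (F + G) H = poisson F H + poisson G H := by
  simp only [poisson, map_add, ← Finset.sum_add_distrib]
  exact Finset.sum_congr rfl fun _ _ => by ring

lemma poisson_add_right (F G H : MvPolynomial (Fin m ⊕ Fin m) ℝ) :
    poisson F (G + H) = poisson F G + poisson F H := by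
  simp only [poisson, map_add, ← Finset.sum_add_distrib]
  exact Finset.sum_congr rfl fun _ _ => by ring

lemma poisson_sum_left {ι : Type*} (s : Finset ι) (F : ι → MvPolynomial (Fin m ⊕ Fin m) ℝ)
    (G : MvPolynomial (Fin m ⊕ Fin m) ℝ) :
    poisson (∑ i ∈ s, F i) G = ∑ i ∈ s, poisson (F i) G :=
  map_sum (AddMonoidHom.mk' (poisson · G) fun F F' => poisson_add_left F F' G) F s

lemma poisson_sum_right {ι : Type*} (s : Finset ι) (F : MvPolynomial (Fin m ⊕ Fin m) ℝ)
    (G : ι → MvPolynomial (Fin m ⊕ Fin m) ℝ) :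
    poisson F (∑ i ∈ s, G i) = ∑ i ∈ s, poisson F (G i) :=
  map_sum (AddMonoidHom.mk' (poisson F) (poisson_add_right F)) G s

lemma poisson_rename {m' : ℕ} {f : Fin m → Fin m'} (hf : Function.Injective f)
    (F G : MvPolynomial (Fin m ⊕ Fin m) ℝ) :
    poisson (rename (Sum.map f f) F) (rename (Sum.map f f) G) =
      rename (Sum.map f f) (poisson F G) := by
  have hinj : Function.Injective (Sum.map f f) := Sum.map_injective.mpr ⟨hf, hf⟩
  rw [poisson, poisson, map_sum]
  refine (Fintype.sum_of_injective f hf _ _ (fun a ha => ?_) fun i => ?_).symm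
  · have hl : Sum.inl a ∉ Set.range (Sum.map f f) := by
      rintro ⟨i | i, h⟩ <;> simp_all
    have hr : Sum.inr a ∉ Set.range (Sum.map f f) := by
      rintro ⟨i | i, h⟩ <;> simp_all
    simp [pderiv_rename_eq_zero hl, pderiv_rename_eq_zero hr]
  · simp only [map_sub, map_mul, ← pderiv_rename hinj, Sum.map_inl, Sum.map_inr]

end Poisson

section Kp

variable {m : ℕ}

lemma Kp_comm (a b : Fin m) : Kp a b = Kp b a := by
  rw [Kp, Kp]
  ring

lemma rename_Kp {m' : ℕ} (f : Fin m → Fin m') (a b : Fin m) :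
    rename (Sum.map f f) (Kp a b) = Kp (f a) (f b) := by
  simp [Kp]

lemma poisson_Kp_Kp_of_fin_four : poisson (Kp (0 : Fin 4) 1) (Kp 2 3) = 0 := by
  simp only [poisson, Kp, Fin.sum_univ_four, Derivation.leibniz, Derivation.leibniz_pow,
    map_sub, pderiv_X, smul_eq_mul, Pi.single_apply, reduceCtorEq, Sum.inl.injEq,
    Sum.inr.injEq, Fin.reduceEq, reduceIte, mul_zero, mul_one, add_zero, sub_zero]
  ring

lemma poisson_Kp_Kp_add_Kp_of_fin_three :
    poisson (Kp (0 : Fin 3) 1) (Kp 0 2 + Kp 1 2) = 0 := by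
  simp only [poisson, Kp, Fin.sum_univ_three, map_add, Derivation.leibniz,
    Derivation.leibniz_pow, map_sub, pderiv_X, smul_eq_mul, Pi.single_apply, reduceCtorEq,
    Sum.inl.injEq, Sum.inr.injEq, Fin.reduceEq, reduceIte, mul_zero, mul_one,
    add_zero, sub_zero]
  ring

lemma poisson_Kp_Kp_eq_zero {a b c d : Fin m} (hab : a ≠ b) (hac : a ≠ c) (had : a ≠ d)
    (hbc : b ≠ c) (hbd : b ≠ d) (hcd : c ≠ d) : poisson (Kp a b) (Kp c d) = 0 := by
  let f : Fin 4 → Fin m := ![a, b, c, d]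
  have hf : Function.Injective f := by
    intro i j h
    fin_cases i <;> fin_cases j <;> simp_all [f]
  have h := congrArg (rename (Sum.map f f)) poisson_Kp_Kp_of_fin_four
  rwa [← poisson_rename hf, rename_Kp, rename_Kp, map_zero] at h

lemma poisson_Kp_Kp_add_Kp_eq_zero {a b c : Fin m} (hab : a ≠ b) (hac : a ≠ c) (hbc : b ≠ c) :
    poisson (Kp a b) (Kp a c + Kp b c) = 0 := by
  let f : Fin 3 → Fin m := ![a, b, c]
  have hf : Function.Injective f := by
    intro i j h
    fin_cases i <;> fin_cases j <;> simp_all [f]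
  have h := congrArg (rename (Sum.map f f)) poisson_Kp_Kp_add_Kp_of_fin_three
  rwa [← poisson_rename hf, map_add, rename_Kp, rename_Kp, rename_Kp, map_zero] at h

lemma poisson_Kp_sum_sum_Kp {a b : Fin m} {s t : Finset (Fin m)} (ha : a ∈ s)
    (hbs : b ∉ s) (hbt : b ∉ t) (hst : Disjoint s t) :
    poisson (Kp a b) (∑ a' ∈ s, ∑ c ∈ t, Kp a' c) = ∑ c ∈ t, poisson (Kp a b) (Kp a c) := by
  rw [poisson_sum_right, Finset.sum_eq_single_of_mem a ha, poisson_sum_right]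
  intro a' ha' ha'a
  rw [poisson_sum_right]
  refine Finset.sum_eq_zero fun c hc => poisson_Kp_Kp_eq_zero ?_ (Ne.symm ha'a) ?_ ?_ ?_ ?_
  · exact fun h => hbs (h ▸ ha)
  · exact Finset.disjoint_iff_ne.mp hst a ha c hc
  · exact fun h => hbs (h ▸ ha')
  · exact fun h => hbt (h ▸ hc)
  · exact Finset.disjoint_iff_ne.mp hst a' ha' c hc

end Kp

theorem stmt13_general (n k : ℕ) (I : Fin k → Finset (Fin n))
    (hdisj : ∀ α β, α ≠ β → Disjoint (I α) (I β)) :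
    (∀ α β γ : Fin k, α ≠ β → α ≠ γ → β ≠ γ →
        poisson (iota0 I α β) (iota0 I α γ + iota0 I β γ) = 0) ∧
    (∀ α β γ δ : Fin k, α ≠ β → α ≠ γ → α ≠ δ → β ≠ γ → β ≠ δ → γ ≠ δ →
        poisson (iota0 I α β) (iota0 I γ δ) = 0) := by
  have hne {α β : Fin k} {a b : Fin n} (h : α ≠ β) (ha : a ∈ I α) (hb : b ∈ I β) : a ≠ b :=
    Finset.disjoint_iff_ne.mp (hdisj α β h) a ha b hb
  have hnotMem {α β : Fin k} {a : Fin n} (h : α ≠ β) (ha : a ∈ I α) : a ∉ I β :=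
    Finset.disjoint_left.mp (hdisj α β h) ha
  refine ⟨fun α β γ hαβ hαγ hβγ => ?_, fun α β γ δ hαβ hαγ hαδ hβγ hβδ hγδ => ?_⟩
  · simp only [iota0, poisson_sum_left]
    refine Finset.sum_eq_zero fun a ha => Finset.sum_eq_zero fun b hb => ?_
    rw [poisson_add_right, poisson_Kp_sum_sum_Kp ha (hnotMem hαβ.symm hb)
        (hnotMem hβγ hb) (hdisj α γ hαγ), Kp_comm a b,
      poisson_Kp_sum_sum_Kp hb (hnotMem hαβ ha) (hnotMem hαγ ha) (hdisj β γ hβγ), Kp_comm b a,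
      ← Finset.sum_add_distrib]
    refine Finset.sum_eq_zero fun c hc => ?_
    rw [← poisson_add_right]
    exact poisson_Kp_Kp_add_Kp_eq_zero (hne hαβ ha hb) (hne hαγ ha hc) (hne hβγ hb hc)
  · simp only [iota0, poisson_sum_left, poisson_sum_right]
    exact Finset.sum_eq_zero fun c hc => Finset.sum_eq_zero fun d hd =>
      Finset.sum_eq_zero fun a ha => Finset.sum_eq_zero fun b hb =>
        poisson_Kp_Kp_eq_zero (hne hαβ ha hb) (hne hαγ ha hc) (hne hαδ ha hd)
          (hne hβγ hb hc) (hne hβδ hb hd) (hne hγδ hc hd)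

theorem stmt13 (n k : ℕ) (I : Fin k → Finset (Fin n))
    (hne : ∀ α, (I α).Nonempty)
    (hdisj : ∀ α β, α ≠ β → Disjoint (I α) (I β))
    (hcover : ∀ a : Fin n, ∃ α, a ∈ I α) :
    (∀ α β γ : Fin k, α ≠ β → α ≠ γ → β ≠ γ →
        poisson (iota0 I α β) (iota0 I α γ + iota0 I β γ) = 0) ∧
    (∀ α β γ δ : Fin k, α ≠ β → α ≠ γ → α ≠ δ → β ≠ γ → β ≠ δ → γ ≠ δ →
        poisson (iota0 I α β) (iota0 I γ δ) = 0) :=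
  stmt13_general n k I hdisj
end

section
/- For distinct $p\in\{1,\dots,k\}$, indices $i,j\in I_p$ with $i\ne j$, and distinct $\alpha\ne\beta$ in $\{1,\dots,k\}$, the function $K_{ij}(x,p)=(x_ip_j-x_jp_i)^2$ Poisson-commutes with $\sum_{a\in I_\alpha,\,b\in I_\beta}K_{ab}$, where $I_1,\dots,I_k$ is a partition of $\{1,\dots,n\}$. -/
/-!
`K_ij` is the square of the angular momentum `L_ij = x_i p_j - x_j p_i`, and the `L_ij` satisfy
the `so(n)` relations `{L_ij, L_ab} = δ_ia L_jb + δ_ib L_aj + δ_ja L_bi + δ_jb L_ia`. By the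
Leibniz rule, `{L_ij, ∑_{a ∈ A, b ∈ B} K_ab}` is then a combination of sums of products of two
`L`'s in which the contributions of `i` and of `j` cancel by antisymmetry of `L`, provided `i`
and `j` lie both in or both outside each of `A` and `B`. Hence `L_ij`, and so `K_ij = L_ij²`,
Poisson-commutes with that sum. Any two blocks of a pairwise disjoint family satisfy this as
soon as `i` and `j` lie in a common block.
-/

open MvPolynomial

section PoissonBracket

variable {m : ℕ}

lemma poisson_mul_left (F G H : MvPolynomial (Fin m ⊕ Fin m) ℝ) :
    poisson (F * G) H = F * poisson G H + G * poisson F H := by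
  simp only [poisson, Derivation.leibniz, smul_eq_mul, Finset.mul_sum, ← Finset.sum_add_distrib]
  exact Finset.sum_congr rfl fun _ _ => by ring

lemma poisson_mul_right (F G H : MvPolynomial (Fin m ⊕ Fin m) ℝ) :
    poisson F (G * H) = G * poisson F H + H * poisson F G := by
  simp only [poisson, Derivation.leibniz, smul_eq_mul, Finset.mul_sum, ← Finset.sum_add_distrib]
  exact Finset.sum_congr rfl fun _ _ => by ring

lemma poisson_sum {ι : Type*} (F : MvPolynomial (Fin m ⊕ Fin m) ℝ) (s : Finset ι)
    (G : ι → MvPolynomial (Fin m ⊕ Fin m) ℝ) :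
    poisson F (∑ x ∈ s, G x) = ∑ x ∈ s, poisson F (G x) := by
  simp only [poisson, map_sum, Finset.mul_sum, Finset.sum_mul, Finset.sum_sub_distrib]
  rw [Finset.sum_comm]
  congr 1
  exact Finset.sum_comm

noncomputable def Lp (i j : Fin m) : MvPolynomial (Fin m ⊕ Fin m) ℝ :=
  X (Sum.inl i) * X (Sum.inr j) - X (Sum.inl j) * X (Sum.inr i)

lemma Kp_eq_Lp_sq (i j : Fin m) : Kp i j = Lp i j ^ 2 := rfl

lemma Lp_swap (i j : Fin m) : Lp j i = -Lp i j := by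
  unfold Lp; ring

lemma pderiv_inl_Lp (c i j : Fin m) :
    pderiv (Sum.inl c) (Lp i j) =
      (if c = i then X (Sum.inr j) else 0) - (if c = j then X (Sum.inr i) else 0) := by
  simp [Lp, pderiv_X, Pi.single_apply, eq_comm]

lemma pderiv_inr_Lp (c i j : Fin m) :
    pderiv (Sum.inr c) (Lp i j) =
      (if c = j then X (Sum.inl i) else 0) - (if c = i then X (Sum.inl j) else 0) := by
  simp [Lp, pderiv_X, Pi.single_apply, eq_comm]

lemma poisson_Lp_Lp (i j a b : Fin m) :
    poisson (Lp i j) (Lp a b) =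
      (if i = a then Lp j b else 0) + (if i = b then Lp a j else 0) +
        (if j = a then Lp b i else 0) + (if j = b then Lp i a else 0) := by
  simp only [poisson, pderiv_inl_Lp, pderiv_inr_Lp, sub_mul, mul_sub, ite_mul, mul_ite, zero_mul,
    mul_zero, Finset.sum_sub_distrib, Finset.sum_ite_eq', Finset.mem_univ, if_true]
  simp only [@eq_comm _ b, @eq_comm _ a, Lp]
  split_ifs <;> subst_vars <;> ring

lemma poisson_Lp_Kp (i j a b : Fin m) :
    poisson (Lp i j) (Kp a b) = 2 * Lp a b * poisson (Lp i j) (Lp a b) := by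
  rw [Kp_eq_Lp_sq, pow_two, poisson_mul_right]; ring

lemma poisson_Lp_sum_sum_Kp {i j : Fin m} {A B : Finset (Fin m)}
    (hA : i ∈ A ↔ j ∈ A) (hB : i ∈ B ↔ j ∈ B) :
    poisson (Lp i j) (∑ a ∈ A, ∑ b ∈ B, Kp a b) = 0 := by
  simp only [poisson_sum, poisson_Lp_Kp, poisson_Lp_Lp, mul_add, mul_ite, mul_zero,
    Finset.sum_add_distrib, Finset.sum_ite_irrel, Finset.sum_const_zero, Finset.sum_ite_eq]
  simp only [Lp_swap _ i, ← hA, ← hB, mul_neg, neg_mul, Finset.sum_neg_distrib, mul_comm,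
    mul_left_comm]
  split_ifs <;> ring

lemma poisson_Kp_sum_sum_Kp_s14 {i j : Fin m} {A B : Finset (Fin m)}
    (hA : i ∈ A ↔ j ∈ A) (hB : i ∈ B ↔ j ∈ B) :
    poisson (Kp i j) (∑ a ∈ A, ∑ b ∈ B, Kp a b) = 0 := by
  rw [Kp_eq_Lp_sq, pow_two, poisson_mul_left, poisson_Lp_sum_sum_Kp hA hB, mul_zero, add_zero]

end PoissonBracket

lemma Finset.mem_iff_eq_of_disjoint {ι κ : Type*} {I : κ → Finset ι}
    (hI : ∀ α β, α ≠ β → Disjoint (I α) (I β)) {i : ι} {p : κ} (hi : i ∈ I p) (α : κ) :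
    i ∈ I α ↔ α = p :=
  ⟨fun h => by_contra fun hαp => Finset.disjoint_left.mp (hI α p hαp) h hi, fun h => h ▸ hi⟩

theorem stmt14_general (n k : ℕ) (I : Fin k → Finset (Fin n))
    (hdisj : ∀ α β, α ≠ β → Disjoint (I α) (I β))
    (p α β : Fin k)
    (i j : Fin n) (hi : i ∈ I p) (hj : j ∈ I p) :
    poisson (Kp i j) (∑ a ∈ I α, ∑ b ∈ I β, Kp a b) = 0 := by
  have hsame : ∀ γ, i ∈ I γ ↔ j ∈ I γ := fun γ =>
    (Finset.mem_iff_eq_of_disjoint hdisj hi γ).trans (Finset.mem_iff_eq_of_disjoint hdisj hj γ).symm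
  exact poisson_Kp_sum_sum_Kp_s14 (hsame α) (hsame β)

theorem stmt14 (n k : ℕ) (I : Fin k → Finset (Fin n))
    (hne : ∀ α, (I α).Nonempty)
    (hdisj : ∀ α β, α ≠ β → Disjoint (I α) (I β))
    (hcover : ∀ a : Fin n, ∃ α, a ∈ I α)
    (p α β : Fin k) (hαβ : α ≠ β)
    (i j : Fin n) (hi : i ∈ I p) (hj : j ∈ I p) (hij : i ≠ j) :
    poisson (Kp i j) (∑ a ∈ I α, ∑ b ∈ I β, Kp a b) = 0 :=
  stmt14_general n k I hdisj p α β i j hi hj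
end

section
/- Fix pairwise distinct reals $z_1,\dots,z_{n+1}$ and define $\hat K(b)=\sum_{1\le i<j\le n+1}\frac{b_i-b_j}{z_i-z_j}K_{ij}(x)$ with the matrices $K_{ij}$ defined below. Then for all $b,b'\in\mathbb{R}^{n+1}$ and all $x\in\mathbb{R}^{n+1}$, the matrices $\hat K(b)(x)$ and $\hat K(b')(x)$ commute. -/
/-- The Gaudin Killing tensor `K̂(b) = ∑_{i<j} ((b_i - b_j)/(z_i - z_j)) K_{ij}(x)`. -/
noncomputable def GaudinMat {m : ℕ} (z b : Fin m → ℝ) (x : Fin m → ℝ) : Matrix (Fin m) (Fin m) ℝ :=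
  ∑ q ∈ Finset.univ.filter (fun q : Fin m × Fin m => q.1 < q.2),
    ((b q.1 - b q.2) / (z q.1 - z q.2)) • Kmat x q.1 q.2

noncomputable def al {m : ℕ} (z b : Fin m → ℝ) (i j : Fin m) : ℝ := (b i - b j) / (z i - z j)

lemma al_symm {m : ℕ} (z b : Fin m → ℝ) (i j : Fin m) : al z b i j = al z b j i := by
  rw [al, al, ← neg_sub (b j), ← neg_sub (z j), neg_div_neg_eq]

lemma al_self {m : ℕ} (z b : Fin m → ℝ) (i : Fin m) : al z b i i = 0 := by simp [al]

lemma sum_pairs {m : ℕ} (f : Fin m × Fin m → ℝ)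
    (hsymm : ∀ i j, f (i, j) = f (j, i)) (hdiag : ∀ i, f (i, i) = 0) :
    2 * ∑ q ∈ Finset.univ.filter (fun q : Fin m × Fin m => q.1 < q.2), f q
      = ∑ i, ∑ j, f (i, j) := by
  have h1 : ∑ i, ∑ j, f (i, j) = ∑ q : Fin m × Fin m, f q := by
    rw [← Finset.sum_product']
    rfl
  have h2 : (Finset.univ : Finset (Fin m × Fin m)) =
      (Finset.univ.filter fun q : Fin m × Fin m => q.1 < q.2) ∪
      ((Finset.univ.filter fun q : Fin m × Fin m => q.2 < q.1) ∪
       (Finset.univ.filter fun q : Fin m × Fin m => q.1 = q.2)) := by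
    ext q
    simp only [Finset.mem_union, Finset.mem_filter, Finset.mem_univ, true_and]
    constructor
    · intro _; rcases lt_trichotomy q.1 q.2 with h | h | h <;> tauto
    · tauto
  have hd1 : Disjoint (Finset.univ.filter fun q : Fin m × Fin m => q.1 < q.2)
      ((Finset.univ.filter fun q : Fin m × Fin m => q.2 < q.1) ∪
       (Finset.univ.filter fun q : Fin m × Fin m => q.1 = q.2)) := by
    rw [Finset.disjoint_left]
    intro q hq1 hq2
    simp only [Finset.mem_union, Finset.mem_filter, Finset.mem_univ, true_and] at hq1 hq2
    rcases hq2 with h | h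
    · exact absurd hq1 (not_lt.mpr h.le)
    · exact absurd h (ne_of_lt hq1)
  have hd2 : Disjoint (Finset.univ.filter fun q : Fin m × Fin m => q.2 < q.1)
      (Finset.univ.filter fun q : Fin m × Fin m => q.1 = q.2) := by
    rw [Finset.disjoint_left]
    intro q hq1 hq2
    simp only [Finset.mem_filter, Finset.mem_univ, true_and] at hq1 hq2
    exact absurd hq2.symm (ne_of_lt hq1)
  have h3 : ∑ q ∈ Finset.univ.filter (fun q : Fin m × Fin m => q.1 = q.2), f q = 0 := by
    apply Finset.sum_eq_zero
    intro q hq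
    simp only [Finset.mem_filter] at hq
    obtain ⟨q1, q2⟩ := q
    simp only at hq
    rw [hq.2]
    exact hdiag q2
  have h4 : ∑ q ∈ Finset.univ.filter (fun q : Fin m × Fin m => q.2 < q.1), f q
      = ∑ q ∈ Finset.univ.filter (fun q : Fin m × Fin m => q.1 < q.2), f q := by
    apply Finset.sum_nbij' (fun q => Prod.swap q) (fun q => Prod.swap q) <;>
      simp
    intro a b _; exact hsymm a b
  rw [h1]
  conv_rhs => rw [h2]
  rw [Finset.sum_union hd1, Finset.sum_union hd2, h3, h4]
  ring


lemma kmat_comm {m : ℕ} (x : Fin m → ℝ) (i j a c : Fin m) :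
    Kmat x i j a c = Kmat x j i a c := by
  simp only [Kmat, Matrix.of_apply]
  split_ifs <;> first | tauto | (simp_all; try ring)

lemma hpt {m : ℕ} (z b x : Fin m → ℝ) (a c i j : Fin m) :
    al z b i j * Kmat x i j a c =
      (if a = i ∧ c = i then al z b i j * x j ^ 2 else 0)
      + (if a = j ∧ c = j then al z b i j * x i ^ 2 else 0)
      - (if a = i ∧ c = j then al z b i j * (x i * x j) else 0)
      - (if a = j ∧ c = i then al z b i j * (x i * x j) else 0) := by
  by_cases hij : i = j
  · subst hij; simp [al_self]
  · simp only [Kmat, Matrix.of_apply]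
    split_ifs <;> simp_all

lemma gaudin_entry {m : ℕ} (z b x : Fin m → ℝ) (a c : Fin m) :
    GaudinMat z b x a c =
      (if a = c then ∑ k, al z b a k * x k ^ 2 else 0) - al z b a c * x a * x c := by
  have hL : GaudinMat z b x a c =
      ∑ q ∈ Finset.univ.filter (fun q : Fin m × Fin m => q.1 < q.2),
        al z b q.1 q.2 * Kmat x q.1 q.2 a c := by
    rw [GaudinMat, Matrix.sum_apply]
    rfl
  have h2 := sum_pairs (fun q : Fin m × Fin m => al z b q.1 q.2 * Kmat x q.1 q.2 a c)
    (fun i j => by simp only; rw [al_symm, kmat_comm])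
    (fun i => by simp [al_self])
  simp only at h2
  have hR : ∑ i, ∑ j, al z b i j * Kmat x i j a c =
      2 * ((if a = c then ∑ k, al z b a k * x k ^ 2 else 0) - al z b a c * x a * x c) := by
    simp only [hpt z b x a c, Finset.sum_sub_distrib, Finset.sum_add_distrib]
    simp only [ite_and, Finset.sum_ite_irrel, Finset.sum_const_zero, Finset.sum_ite_eq,
      Finset.sum_ite_eq', Finset.mem_univ, if_true]
    by_cases hac : a = c
    · subst hac
      have hsum : ∑ k, al z b k a * x k ^ 2 = ∑ k, al z b a k * x k ^ 2 :=
        Finset.sum_congr rfl (fun k _ => by rw [al_symm])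
      simp only [if_pos trivial, hsum, al_self]
      ring
    · simp only [if_neg hac, if_neg (fun h : c = a => hac h.symm), al_symm z b c a]
      ring
  rw [hL]
  linarith [h2, hR]

lemma key {m : ℕ} (z : Fin m → ℝ) (hz : Function.Injective z) (b b' : Fin m → ℝ)
    (a c p : Fin m) :
    al z b a p * al z b' p c - al z b' a p * al z b p c
      + al z b' a p * al z b a c - al z b a p * al z b' a c
      + al z b p c * al z b' a c - al z b' p c * al z b a c = 0 := by
  by_cases hap : a = p
  · subst hap; simp [al_self]; ring
  by_cases hac : a = c
  · subst hac; simp [al_self, al_symm z b a p, al_symm z b' a p]; ring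
  by_cases hpc : p = c
  · subst hpc; simp [al_self]; ring
  have h1 : z a - z p ≠ 0 := sub_ne_zero.mpr (fun h => hap (hz h))
  have h2 : z a - z c ≠ 0 := sub_ne_zero.mpr (fun h => hac (hz h))
  have h3 : z p - z c ≠ 0 := sub_ne_zero.mpr (fun h => hpc (hz h))
  simp only [al]
  field_simp
  ring

theorem stmt17 (n : ℕ) (z : Fin (n + 1) → ℝ) (hz : Function.Injective z)
    (b b' : Fin (n + 1) → ℝ) (x : Fin (n + 1) → ℝ) :
    GaudinMat z b x * GaudinMat z b' x = GaudinMat z b' x * GaudinMat z b x := by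
  ext a c
  simp only [Matrix.mul_apply, gaudin_entry]
  simp only [sub_mul, mul_sub, ite_mul, mul_ite, zero_mul, mul_zero,
    Finset.sum_sub_distrib, Finset.sum_ite_eq, Finset.sum_ite_eq', Finset.mem_univ, if_true]
  have hif : (if a = c then (∑ k, al z b a k * x k ^ 2) * ∑ k, al z b' c k * x k ^ 2 else 0)
      = (if a = c then (∑ k, al z b' a k * x k ^ 2) * ∑ k, al z b c k * x k ^ 2 else 0) := by
    split_ifs with h
    · subst h; ring
    · rfl
  have hLR : al z b a c * x a * x c * (∑ k, al z b' c k * x k ^ 2)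
        + (∑ k, al z b a k * x k ^ 2) * (al z b' a c * x a * x c)
        - ∑ k, al z b a k * x a * x k * (al z b' k c * x k * x c)
      = al z b' a c * x a * x c * (∑ k, al z b c k * x k ^ 2)
        + (∑ k, al z b' a k * x k ^ 2) * (al z b a c * x a * x c)
        - ∑ k, al z b' a k * x a * x k * (al z b k c * x k * x c) := by
    rw [Finset.mul_sum, Finset.sum_mul, ← Finset.sum_add_distrib, ← Finset.sum_sub_distrib,
        Finset.mul_sum, Finset.sum_mul, ← Finset.sum_add_distrib, ← Finset.sum_sub_distrib]
    refine Finset.sum_congr rfl (fun k _ => ?_)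
    linear_combination (-(x a * x c * x k ^ 2)) * key z hz b b' a c k
      + (x a * x c * x k ^ 2) * al z b a c * al_symm z b' c k
      - (x a * x c * x k ^ 2) * al z b' a c * al_symm z b c k
  linarith [hif, hLR]
end
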